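/- arXiv:2404.12213 — 5 statements merged into one kernel-verified Lean document; each statement's English description precedes it below -/
import Mathlib

section
/- Bregman cocoercivity: if a convex differentiable function f is L-relatively smooth with respect to h (i.e., D_f(x,y) ≤ L·D_h(x,y) for all x,y), then for any step size η ≤ 1/L and all x, y, one has D_{h*}(∇h(x) - η[∇f(x) - ∇f(y)], ∇h(x)) ≤ η·D_f(x,y). -/
/-!
By the Fenchel–Young equality `h* (∇h x) = ⟪x, ∇h x⟫ - h x`, the divergence
`D_{h*}(p, ∇h x)` is the supremum over `z` of `⟪z - x, p - ∇h x⟫ - D_h(z, x)`.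
For `p = ∇h x - η (∇f x - ∇f y)` the three-point identity turns the inner product into
`η (D_f(z, x) + D_f(x, y) - D_f(z, y))`; dropping `D_f(z, y) ≥ 0` and using
`η D_f(z, x) ≤ η L D_h(z, x) ≤ D_h(z, x)` bounds every term of the supremum by `η D_f(x, y)`.
-/

open scoped RealInnerProductSpace

/-- Bregman divergence of `g` with gradient map `g'`. -/
noncomputable def Dbreg {d : ℕ} (g : EuclideanSpace ℝ (Fin d) → ℝ)
    (g' : EuclideanSpace ℝ (Fin d) → EuclideanSpace ℝ (Fin d))
    (x y : EuclideanSpace ℝ (Fin d)) : ℝ :=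
  g x - g y - ⟪g' y, x - y⟫

open Set AffineMap

section InnerProductSpace

variable {E : Type*} [NormedAddCommGroup E] [InnerProductSpace ℝ E] [CompleteSpace E]
  {h : E → ℝ} {g x : E}

theorem ConvexOn.add_inner_le_of_hasGradientAt (hh : ConvexOn ℝ univ h)
    (hx : HasGradientAt h g x) (y : E) : h x + ⟪g, y - x⟫ ≤ h y := by
  have hline : ConvexOn ℝ univ (h ∘ lineMap (k := ℝ) x y) := by
    simpa using hh.comp_affineMap (lineMap x y)
  have hderiv : HasDerivAt (h ∘ lineMap (k := ℝ) x y) ⟪g, y - x⟫ 0 := by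
    simpa using hx.hasFDerivAt.comp_hasDerivAt_of_eq (0 : ℝ) hasDerivAt_lineMap (by simp)
  have := hline.le_slope_of_hasDerivAt (mem_univ 0) (mem_univ 1) one_pos hderiv
  simp only [slope, sub_zero, inv_one, Function.comp_apply, lineMap_apply_one,
    lineMap_apply_zero, vsub_eq_sub, smul_eq_mul, one_mul] at this
  linarith

theorem ConvexOn.iSup_inner_sub_eq_of_hasGradientAt (hh : ConvexOn ℝ univ h)
    (hx : HasGradientAt h g x) : ⨆ z, (⟪z, g⟫ - h z) = ⟪x, g⟫ - h x := by
  have hle : ∀ z, ⟪z, g⟫ - h z ≤ ⟪x, g⟫ - h x := fun z => by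
    have := hh.add_inner_le_of_hasGradientAt hx z
    rw [inner_sub_right] at this
    rw [real_inner_comm g z, real_inner_comm g x]
    linarith
  exact le_antisymm (ciSup_le hle) (le_ciSup ⟨_, forall_mem_range.2 hle⟩ x)

end InnerProductSpace

section Bregman

variable {d : ℕ} {g h hs : EuclideanSpace ℝ (Fin d) → ℝ}
  {g' h' hs' : EuclideanSpace ℝ (Fin d) → EuclideanSpace ℝ (Fin d)}

theorem Dbreg_nonneg {y : EuclideanSpace ℝ (Fin d)} (hg : ConvexOn ℝ univ g)
    (hy : HasGradientAt g (g' y) y) (x : EuclideanSpace ℝ (Fin d)) : 0 ≤ Dbreg g g' x y := by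
  have := hg.add_inner_le_of_hasGradientAt hy x
  unfold Dbreg
  linarith

theorem Dbreg_three_point (x y z : EuclideanSpace ℝ (Fin d)) :
    Dbreg g g' z y = Dbreg g g' z x + Dbreg g g' x y + ⟪g' x - g' y, z - x⟫ := by
  simp only [Dbreg, inner_sub_left, inner_sub_right]
  ring

theorem Dbreg_conjugate_le {x p : EuclideanSpace ℝ (Fin d)} {c : ℝ}
    (hconj : ∀ y, hs y = ⨆ z, (⟪z, y⟫ - h z)) (hh : ConvexOn ℝ univ h)
    (hx : HasGradientAt h (h' x) x) (hinv : hs' (h' x) = x)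
    (hbound : ∀ z, ⟪z - x, p - h' x⟫ ≤ Dbreg h h' z x + c) :
    Dbreg hs hs' p (h' x) ≤ c := by
  have hsup : hs p ≤ ⟪x, p⟫ - h x + c := by
    rw [hconj]
    refine ciSup_le fun z => ?_
    have := hbound z
    simp only [Dbreg, inner_sub_left, inner_sub_right, real_inner_comm (h' x)] at this
    linarith
  rw [Dbreg, hinv, hconj (h' x), hh.iSup_inner_sub_eq_of_hasGradientAt hx, inner_sub_right]
  linarith

theorem inner_sub_gradient_le_of_relSmooth {L η : ℝ} {x y : EuclideanSpace ℝ (Fin d)}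
    (hη : 0 ≤ η) (hηL : η * L ≤ 1) (hh : ConvexOn ℝ univ h) (hx : HasGradientAt h (h' x) x)
    (hg : ConvexOn ℝ univ g) (hy : HasGradientAt g (g' y) y)
    (hsmooth : ∀ x y, Dbreg g g' x y ≤ L * Dbreg h h' x y) (z : EuclideanSpace ℝ (Fin d)) :
    η * ⟪x - z, g' x - g' y⟫ ≤ Dbreg h h' z x + η * Dbreg g g' x y := by
  have hzy := Dbreg_nonneg hg hy z
  have hzx := Dbreg_nonneg hh hx z
  have hsmooth_zx : η * Dbreg g g' z x ≤ Dbreg h h' z x := calc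
    η * Dbreg g g' z x ≤ η * (L * Dbreg h h' z x) := by gcongr; exact hsmooth z x
    _ = (η * L) * Dbreg h h' z x := by ring
    _ ≤ Dbreg h h' z x := mul_le_of_le_one_left hzx hηL
  have hthree := Dbreg_three_point (g := g) (g' := g') x y z
  rw [← neg_sub z x, inner_neg_left, real_inner_comm]
  nlinarith [mul_nonneg hη hzy]

end Bregman

theorem bregman_cocoercivity_general {d : ℕ}
    (h hs f : EuclideanSpace ℝ (Fin d) → ℝ)
    (h' hs' f' : EuclideanSpace ℝ (Fin d) → EuclideanSpace ℝ (Fin d))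
    (L η : ℝ) (hL : 0 < L) (hη : 0 < η) (hηL : η ≤ 1 / L)
    (hconv : StrictConvexOn ℝ Set.univ h)
    (hgrad : ∀ x, HasGradientAt h (h' x) x)
    (hconj : ∀ y, hs y = ⨆ x, (⟪x, y⟫ - h x))
    (hinv : ∀ x, hs' (h' x) = x)
    (hfconv : ConvexOn ℝ Set.univ f)
    (hfgrad : ∀ x, HasGradientAt f (f' x) x)
    (hsmooth : ∀ x y, Dbreg f f' x y ≤ L * Dbreg h h' x y) :
    ∀ x y, Dbreg hs hs' (h' x - η • (f' x - f' y)) (h' x) ≤ η * Dbreg f f' x y := by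
  intro x y
  have hηL' : η * L ≤ 1 := (le_div_iff₀ hL).1 hηL
  refine Dbreg_conjugate_le hconj hconv.convexOn (hgrad x) (hinv x) fun z => ?_
  have := inner_sub_gradient_le_of_relSmooth hη.le hηL' hconv.convexOn (hgrad x) hfconv
    (hfgrad y) hsmooth z
  rwa [sub_sub_cancel_left, inner_neg_right, inner_smul_right, ← mul_neg, ← inner_neg_left,
    neg_sub]

/-- Bregman cocoercivity. -/
theorem bregman_cocoercivity {d : ℕ}
    (h hs f : EuclideanSpace ℝ (Fin d) → ℝ)
    (h' hs' f' : EuclideanSpace ℝ (Fin d) → EuclideanSpace ℝ (Fin d))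
    (L η : ℝ) (hL : 0 < L) (hη : 0 < η) (hηL : η ≤ 1 / L)
    (hconv : StrictConvexOn ℝ Set.univ h)
    (hgrad : ∀ x, HasGradientAt h (h' x) x)
    (hconj : ∀ y, hs y = ⨆ x, (⟪x, y⟫ - h x))
    (hsgrad : ∀ y, HasGradientAt hs (hs' y) y)
    (hinv : ∀ x, hs' (h' x) = x)
    (hfconv : ConvexOn ℝ Set.univ f)
    (hfgrad : ∀ x, HasGradientAt f (f' x) x)
    (hsmooth : ∀ x y, Dbreg f f' x y ≤ L * Dbreg h h' x y) :
    ∀ x y, Dbreg hs hs' (h' x - η • (f' x - f' y)) (h' x) ≤ η * Dbreg f f' x y :=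
  bregman_cocoercivity_general h hs f h' hs' f' L η hL hη hηL hconv hgrad hconj hinv hfconv hfgrad
    hsmooth
end

section
/- Monotonicity in the step size: the function φ(η) = (1/η)·D_h(x, x⁺(η)), where ∇h(x⁺(η)) = ∇h(x) - η·g for a fixed vector g, has derivative φ'(η) = (1/η²)·D_h(x⁺(η), x) ≥ 0; in particular φ is nondecreasing in η. -/
open MeasureTheory
open scoped RealInnerProductSpace

/-! Differentiating the identity `∇h(x⁺(η)) = ∇h(x) - η g` shows that `η ↦ D_h(x, x⁺(η))` has
derivative `⟪g, x - x⁺(η)⟫`, while the symmetrised divergence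
`D_h(x⁺, x) + D_h(x, x⁺) = ⟪∇h(x⁺) - ∇h(x), x⁺ - x⟫` equals `η ⟪g, x - x⁺⟫`. The quotient rule then
gives `φ'(η) = D_h(x⁺(η), x) / η²`, which is nonnegative by the first-order characterisation of
convexity. -/

theorem ConvexOn.le_sub_of_hasFDerivAt {E : Type*} [NormedAddCommGroup E] [NormedSpace ℝ E]
    {s : Set E} {f : E → ℝ} {f' : E →L[ℝ] ℝ} {x y : E} (hf : ConvexOn ℝ s f)
    (hx : x ∈ s) (hy : y ∈ s) (hfx : HasFDerivAt f f' x) :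
    f' (y - x) ≤ f y - f x := by
  have hline : HasDerivAt (f ∘ AffineMap.lineMap (k := ℝ) x y) (f' (y - x)) 0 := by
    rw [← AffineMap.lineMap_apply_zero x y (k := ℝ)] at hfx
    exact hfx.comp_hasDerivAt 0 AffineMap.hasDerivAt_lineMap
  have hslope := (hf.comp_affineMap (AffineMap.lineMap x y)).le_slope_of_hasDerivAt
    (by simpa using hx) (by simpa using hy) one_pos hline
  simpa [slope] using hslope

section Bregman

variable {d : ℕ} {h : EuclideanSpace ℝ (Fin d) → ℝ}
  {h' : EuclideanSpace ℝ (Fin d) → EuclideanSpace ℝ (Fin d)}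

theorem Dbreg_nonneg_s6 (hconv : ConvexOn ℝ Set.univ h) {x : EuclideanSpace ℝ (Fin d)}
    (hgrad : HasGradientAt h (h' x) x) (y : EuclideanSpace ℝ (Fin d)) :
    0 ≤ Dbreg h h' y x := by
  have hsupport := hconv.le_sub_of_hasFDerivAt (Set.mem_univ x) (Set.mem_univ y)
    hgrad.hasFDerivAt
  rw [InnerProductSpace.toDual_apply_apply] at hsupport
  simp only [Dbreg]
  linarith

theorem Dbreg_add_Dbreg_swap (x y : EuclideanSpace ℝ (Fin d)) :
    Dbreg h h' x y + Dbreg h h' y x = ⟪h' x - h' y, x - y⟫ := by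
  simp only [Dbreg, inner_sub_left, inner_sub_right]
  ring

theorem hasDerivAt_Dbreg_right {x : EuclideanSpace ℝ (Fin d)}
    {y : ℝ → EuclideanSpace ℝ (Fin d)} {y' v : EuclideanSpace ℝ (Fin d)} {t : ℝ}
    (hy : HasDerivAt y y' t) (hgy : HasDerivAt (fun s => h' (y s)) v t)
    (hgrad : HasGradientAt h (h' (y t)) (y t)) :
    HasDerivAt (fun s => Dbreg h h' x (y s)) (-⟪v, x - y t⟫) t := by
  have hhy : HasDerivAt (fun s => h (y s)) ⟪h' (y t), y'⟫ t := by
    have h_comp := hgrad.hasFDerivAt.comp_hasDerivAt t hy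
    rw [InnerProductSpace.toDual_apply_apply] at h_comp
    exact h_comp
  have hpair : HasDerivAt (fun s => ⟪h' (y s), x - y s⟫) (⟪h' (y t), -y'⟫ + ⟪v, x - y t⟫) t :=
    hgy.inner ℝ (hy.const_sub x)
  have hderiv : -⟪h' (y t), y'⟫ - (⟪h' (y t), -y'⟫ + ⟪v, x - y t⟫) = -⟪v, x - y t⟫ := by
    rw [inner_neg_right]
    ring
  have hD := (hhy.const_sub (h x)).sub hpair
  rw [hderiv] at hD
  exact hD

end Bregman

theorem phi_deriv_and_monotone_general {d : ℕ}
    (h : EuclideanSpace ℝ (Fin d) → ℝ)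
    (h' : EuclideanSpace ℝ (Fin d) → EuclideanSpace ℝ (Fin d))
    (hconv : StrictConvexOn ℝ Set.univ h)
    (hgrad : ∀ z, HasGradientAt h (h' z) z)
    (x g : EuclideanSpace ℝ (Fin d))
    (xp xp' : ℝ → EuclideanSpace ℝ (Fin d))
    (hxp : ∀ η, h' (xp η) = h' x - η • g)
    (hdiff : ∀ η, 0 < η → HasDerivAt xp (xp' η) η) :
    (∀ η, 0 < η →
        HasDerivAt (fun t => (1 / t) * Dbreg h h' x (xp t))
          ((1 / η ^ 2) * Dbreg h h' (xp η) x) η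
        ∧ 0 ≤ (1 / η ^ 2) * Dbreg h h' (xp η) x)
      ∧ MonotoneOn (fun t => (1 / t) * Dbreg h h' x (xp t)) (Set.Ioi (0 : ℝ)) := by
  have hnonneg (η : ℝ) : 0 ≤ (1 / η ^ 2) * Dbreg h h' (xp η) x :=
    mul_nonneg (by positivity) (Dbreg_nonneg_s6 hconv.convexOn (hgrad x) _)
  have hderiv (η : ℝ) (hη : 0 < η) : HasDerivAt (fun t => (1 / t) * Dbreg h h' x (xp t))
      ((1 / η ^ 2) * Dbreg h h' (xp η) x) η := by
    have hgrad_path : HasDerivAt (fun t => h' (xp t)) (-g) η := by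
      simp only [hxp]
      simpa using ((hasDerivAt_id η).smul_const g).const_sub (h' x)
    have hD := hasDerivAt_Dbreg_right (x := x) (hdiff η hη) hgrad_path (hgrad _)
    have hsymm : Dbreg h h' (xp η) x + Dbreg h h' x (xp η) = η * ⟪g, x - xp η⟫ := by
      rw [Dbreg_add_Dbreg_swap, hxp, sub_sub_cancel_left, inner_neg_left, real_inner_smul_left,
        ← neg_sub x, inner_neg_right, mul_neg, neg_neg]
    have hinv : HasDerivAt (fun t : ℝ => 1 / t) (-(1 / η ^ 2)) η := by
      simpa [one_div] using hasDerivAt_inv hη.ne'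
    have hprod : HasDerivAt (fun t => (1 / t) * Dbreg h h' x (xp t))
        (-(1 / η ^ 2) * Dbreg h h' x (xp η) + 1 / η * -⟪-g, x - xp η⟫) η := hinv.mul hD
    convert hprod using 1
    rw [inner_neg_left, neg_neg]
    field_simp
    linear_combination hsymm
  refine ⟨fun η hη => ⟨hderiv η hη, hnonneg η⟩, ?_⟩
  refine monotoneOn_of_hasDerivWithinAt_nonneg (f' := fun η => (1 / η ^ 2) * Dbreg h h' (xp η) x)
    (convex_Ioi 0) (fun t ht => (hderiv t ht).continuousAt.continuousWithinAt) ?_ ?_ <;> rw [interior_Ioi]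
  · exact fun t ht => (hderiv t ht).hasDerivWithinAt
  · exact fun t _ => hnonneg t

/-- monotonicity of `φ(η) = (1/η) D_h(x, x⁺(η))` in the step size. -/
theorem phi_deriv_and_monotone {d : ℕ}
    (h : EuclideanSpace ℝ (Fin d) → ℝ)
    (h' : EuclideanSpace ℝ (Fin d) → EuclideanSpace ℝ (Fin d))
    (hC2 : ContDiff ℝ 2 h)
    (hconv : StrictConvexOn ℝ Set.univ h)
    (hgrad : ∀ z, HasGradientAt h (h' z) z)
    (x g : EuclideanSpace ℝ (Fin d))
    (xp xp' : ℝ → EuclideanSpace ℝ (Fin d))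
    (hxp : ∀ η, h' (xp η) = h' x - η • g)
    (hdiff : ∀ η, 0 < η → HasDerivAt xp (xp' η) η) :
    (∀ η, 0 < η →
        HasDerivAt (fun t => (1 / t) * Dbreg h h' x (xp t))
          ((1 / η ^ 2) * Dbreg h h' (xp η) x) η
        ∧ 0 ≤ (1 / η ^ 2) * Dbreg h h' (xp η) x)
      ∧ MonotoneOn (fun t => (1 / t) * Dbreg h h' x (xp t)) (Set.Ioi (0 : ℝ)) :=
  phi_deriv_and_monotone_general h h' hconv hgrad x g xp xp' hxp hdiff
end

section
/- Gradient control via the reversed Bregman divergence: if f is L-relatively smooth w.r.t. h and ∇f(x_⋆) = 0, then for all x, D_f(x_⋆, x) ≥ L·D_{h*}(∇h(x_⋆) + ∇f(x)/L, ∇h(x_⋆)), and the right-hand side is strictly positive whenever ∇f(x) ≠ 0 (equivalently x ≠ x_⋆ under strict convexity of h). -/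
open MeasureTheory
open scoped RealInnerProductSpace

/-!
With `q = ∇h(x⋆)`, the supremum defining `h*(q)` is attained at `x⋆`, and `∇h*(q) = x⋆`, so
`D_{h*}(p, q) = h*(p) - (⟪x⋆, p⟫ - h(x⋆))` is the Fenchel–Young gap of `(x⋆, p)`.
For `p = q + ∇f(x)/L`, every term `⟪u, p⟫ - h(u)` of the supremum exceeds its value at `x⋆`
by `(⟪∇f(x), u - x⋆⟫ - L D_h(u, x⋆)) / L`; relative smoothness at `(u, x⋆)` (where `∇f(x⋆) = 0`)
bounds `L D_h(u, x⋆)` below by `f(u) - f(x⋆)`, and the gradient inequality of `f` at `x` then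
bounds the excess by `D_f(x⋆, x) / L`. The gap vanishes only if `x⋆` maximizes
`⟪·, p⟫ - h`, i.e. only if `∇h(x⋆) = p`, i.e. only if `∇f(x) = 0`.
-/

open Set

section Gradient

variable {E : Type*} [NormedAddCommGroup E] [InnerProductSpace ℝ E] [CompleteSpace E]
  {φ : E → ℝ} {g a : E}

theorem HasGradientAt.hasDerivAt_comp_add_smul (hφ : HasGradientAt φ g a) (v : E) :
    HasDerivAt (fun t : ℝ => φ (a + t • v)) ⟪g, v⟫ 0 := by
  have hline : HasDerivAt (fun t : ℝ => a + t • v) v 0 := by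
    simpa using ((hasDerivAt_id (0 : ℝ)).smul_const v).const_add a
  have := hφ.hasFDerivAt.comp_hasDerivAt_of_eq 0 hline (by simp)
  simp only [InnerProductSpace.toDual_apply_apply] at this
  exact this

theorem ConvexOn.add_inner_sub_le_of_hasGradientAt (hconv : ConvexOn ℝ univ φ)
    (hφ : HasGradientAt φ g a) (b : E) : φ a + ⟪g, b - a⟫ ≤ φ b := by
  have hline : φ ∘ AffineMap.lineMap a b = fun t : ℝ => φ (a + t • (b - a)) := by
    funext t; simp [AffineMap.lineMap_apply, add_comm]
  have hslope := (hconv.comp_affineMap (AffineMap.lineMap a b)).le_slope_of_hasDerivAt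
    (mem_univ 0) (mem_univ 1) one_pos (hline ▸ hφ.hasDerivAt_comp_add_smul (b - a))
  simp [hline, slope_def_field] at hslope
  linarith

theorem ConvexOn.isMaxOn_inner_sub_of_hasGradientAt (hconv : ConvexOn ℝ univ φ)
    (hφ : HasGradientAt φ g a) : IsMaxOn (fun u => ⟪u, g⟫ - φ u) univ a :=
  isMaxOn_univ_iff.2 fun u => by
    have := hconv.add_inner_sub_le_of_hasGradientAt hφ u
    rw [inner_sub_right, real_inner_comm a, real_inner_comm u] at this
    linarith

theorem HasGradientAt.eq_of_isMaxOn_inner_sub {p : E} (hφ : HasGradientAt φ g a)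
    (hmax : IsMaxOn (fun u => ⟪u, p⟫ - φ u) univ a) : g = p := by
  have hinner : HasGradientAt (fun u => ⟪u, p⟫) p a := by
    have : HasGradientAt (fun u => ⟪p, u⟫) p a := (innerSL ℝ p).hasFDerivAt
    simpa only [real_inner_comm p] using this
  have hzero := (hmax.isLocalMax Filter.univ_mem).hasFDerivAt_eq_zero
    (hinner.hasFDerivAt.sub hφ.hasFDerivAt)
  rw [← map_sub, map_eq_zero_iff _ (InnerProductSpace.toDual ℝ E).injective, sub_eq_zero] at hzero
  exact hzero.symm

end Gradient

section Conjugate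

variable {E : Type*} [NormedAddCommGroup E] [InnerProductSpace ℝ E] [CompleteSpace E]
  {h hs : E → ℝ} {g z p : E}

theorem conj_apply_of_hasGradientAt (hconj : ∀ y, hs y = ⨆ z, (⟪z, y⟫ - h z))
    (hconv : ConvexOn ℝ univ h) (hg : HasGradientAt h g z) : hs g = ⟪z, g⟫ - h z := by
  have hmax := isMaxOn_univ_iff.1 (hconv.isMaxOn_inner_sub_of_hasGradientAt hg)
  rw [hconj g]
  exact le_antisymm (ciSup_le hmax) (le_ciSup ⟨_, forall_mem_range.2 hmax⟩ z)

theorem inner_sub_lt_conj (hconj : ∀ y, hs y = ⨆ z, (⟪z, y⟫ - h z))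
    (hbdd : BddAbove (range fun u => ⟪u, p⟫ - h u)) (hg : HasGradientAt h g z) (hne : g ≠ p) :
    ⟪z, p⟫ - h z < hs p := by
  have hle : ∀ u, ⟪u, p⟫ - h u ≤ hs p := fun u => hconj p ▸ le_ciSup hbdd u
  refine (hle z).lt_of_ne fun heq => hne (hg.eq_of_isMaxOn_inner_sub ?_)
  exact isMaxOn_univ_iff.2 fun u => heq ▸ hle u

end Conjugate

section Bregman

variable {d : ℕ} {h hs f : EuclideanSpace ℝ (Fin d) → ℝ}
  {h' hs' f' : EuclideanSpace ℝ (Fin d) → EuclideanSpace ℝ (Fin d)}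

theorem Dbreg_conj_gradient (hconj : ∀ y, hs y = ⨆ z, (⟪z, y⟫ - h z))
    (hconv : ConvexOn ℝ univ h) {z : EuclideanSpace ℝ (Fin d)} (hg : HasGradientAt h (h' z) z)
    (hinv : hs' (h' z) = z) (p : EuclideanSpace ℝ (Fin d)) :
    Dbreg hs hs' p (h' z) = hs p - (⟪z, p⟫ - h z) := by
  rw [Dbreg, hinv, conj_apply_of_hasGradientAt hconj hconv hg, inner_sub_right]
  ring

theorem inner_sub_le_add_Dbreg_div {L : ℝ} (hL : 0 < L) (hfconv : ConvexOn ℝ univ f)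
    {x xstar : EuclideanSpace ℝ (Fin d)} (hfx : HasGradientAt f (f' x) x)
    (hsmooth : ∀ u, Dbreg f f' u xstar ≤ L * Dbreg h h' u xstar) (hstar : f' xstar = 0)
    (u : EuclideanSpace ℝ (Fin d)) :
    ⟪u, h' xstar + (1 / L) • f' x⟫ - h u ≤
      ⟪xstar, h' xstar + (1 / L) • f' x⟫ - h xstar + Dbreg f f' xstar x / L := by
  have hexcess : L * (⟪u, h' xstar + (1 / L) • f' x⟫ - h u -
      (⟪xstar, h' xstar + (1 / L) • f' x⟫ - h xstar)) =
      ⟪f' x, u - xstar⟫ - L * Dbreg h h' u xstar := by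
    simp only [Dbreg, inner_add_right, inner_smul_right, inner_sub_right, real_inner_comm]
    field_simp
    ring
  have hDf : Dbreg f f' u xstar = f u - f xstar := by simp [Dbreg, hstar]
  have hf := hfconv.add_inner_sub_le_of_hasGradientAt hfx u
  rw [← sub_le_iff_le_add', le_div_iff₀' hL, hexcess]
  calc ⟪f' x, u - xstar⟫ - L * Dbreg h h' u xstar
      ≤ ⟪f' x, u - xstar⟫ - (f u - f xstar) := by linarith [hDf ▸ hsmooth u]
    _ ≤ Dbreg f f' xstar x := by
      rw [inner_sub_right] at hf
      rw [Dbreg, inner_sub_right, inner_sub_right]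
      linarith

end Bregman

theorem grad_control_reversed_bregman_general {d : ℕ}
    (h hs f : EuclideanSpace ℝ (Fin d) → ℝ)
    (h' hs' f' : EuclideanSpace ℝ (Fin d) → EuclideanSpace ℝ (Fin d))
    (L : ℝ) (hL : 0 < L)
    (hconv : StrictConvexOn ℝ Set.univ h)
    (hgrad : ∀ z, HasGradientAt h (h' z) z)
    (hconj : ∀ y, hs y = ⨆ z, (⟪z, y⟫ - h z))
    (hinv : ∀ z, hs' (h' z) = z)
    (hfconv : ConvexOn ℝ Set.univ f)
    (hfgrad : ∀ z, HasGradientAt f (f' z) z)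
    (hsmooth : ∀ u v, Dbreg f f' u v ≤ L * Dbreg h h' u v)
    (xstar : EuclideanSpace ℝ (Fin d)) (hstar : f' xstar = 0) :
    ∀ x, L * Dbreg hs hs' (h' xstar + (1 / L) • f' x) (h' xstar) ≤ Dbreg f f' xstar x
      ∧ (f' x ≠ 0 → 0 < Dbreg hs hs' (h' xstar + (1 / L) • f' x) (h' xstar)) := by
  intro x
  set p := h' xstar + (1 / L) • f' x
  have hgap := Dbreg_conj_gradient hconj hconv.convexOn (hgrad xstar) (hinv xstar) p
  have hbound : ∀ u, ⟪u, p⟫ - h u ≤ ⟪xstar, p⟫ - h xstar + Dbreg f f' xstar x / L :=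
    inner_sub_le_add_Dbreg_div hL hfconv (hfgrad x) (fun u => hsmooth u xstar) hstar
  refine ⟨?_, fun hfx => ?_⟩
  · have hsup : hs p ≤ ⟪xstar, p⟫ - h xstar + Dbreg f f' xstar x / L := hconj p ▸ ciSup_le hbound
    rw [hgap, ← le_div_iff₀' hL]
    linarith
  · have hne : h' xstar ≠ p := by simpa [p, hL.ne'] using hfx
    rw [hgap, sub_pos]
    exact inner_sub_lt_conj hconj ⟨_, forall_mem_range.2 hbound⟩ (hgrad xstar) hne

/-- gradient control via the reversed Bregman divergence. -/
theorem grad_control_reversed_bregman {d : ℕ}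
    (h hs f : EuclideanSpace ℝ (Fin d) → ℝ)
    (h' hs' f' : EuclideanSpace ℝ (Fin d) → EuclideanSpace ℝ (Fin d))
    (L : ℝ) (hL : 0 < L)
    (hconv : StrictConvexOn ℝ Set.univ h)
    (hgrad : ∀ z, HasGradientAt h (h' z) z)
    (hsgrad : ∀ y, HasGradientAt hs (hs' y) y)
    (hconj : ∀ y, hs y = ⨆ z, (⟪z, y⟫ - h z))
    (hinv : ∀ z, hs' (h' z) = z)
    (hfconv : ConvexOn ℝ Set.univ f)
    (hfgrad : ∀ z, HasGradientAt f (f' z) z)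
    (hsmooth : ∀ u v, Dbreg f f' u v ≤ L * Dbreg h h' u v)
    (xstar : EuclideanSpace ℝ (Fin d)) (hstar : f' xstar = 0) :
    ∀ x, L * Dbreg hs hs' (h' xstar + (1 / L) • f' x) (h' xstar) ≤ Dbreg f f' xstar x
      ∧ (f' x ≠ 0 → 0 < Dbreg hs hs' (h' xstar + (1 / L) • f' x) (h' xstar)) :=
  grad_control_reversed_bregman_general h hs f h' hs' f' L hL hconv hgrad hconj hinv hfconv hfgrad
    hsmooth xstar hstar
end

section
/- Lower bound on the minimizing variance Σ²_η: let X ~ N(m_⋆, Σ²_⋆) and suppose (m_η, Σ²_η) satisfies the stationarity conditions E[(m_η - X)/(Σ²_η + η(m_η - X)²)] = 0 and E[(m_η - X)²/(Σ²_η + η(m_η - X)²)] = 1. Then m_η = m_⋆ and, for η < 1/3, (1 - 3η)·Σ²_⋆ ≤ Σ²_η ≤ Σ²_⋆. -/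
/-!
Write `s = Σ²_η`, `D(y) = s + η y²` and `δ = m_η - m⋆`, so that `Y = m_η - X ∼ N(δ, v)`.
The first condition says `E[h(Y)] = 0` for the odd function `h(y) = y / D(y)`, positive on
`y > 0`. Pairing `y` with `-y`, `2 E[h(Y)] = ∫ h (φ_δ - φ_{-δ})`, and `φ_δ - φ_{-δ}` has the
sign of `y δ`, so `δ = 0`.
With `Y ∼ N(0, v)`, the second condition `E[Y² / D(Y)] = 1` gives `1 ≤ E[Y²] / s = v / s`, and
integrating `2 y² ≤ v · y² / D(y) + y² D(y) / v` (AM–GM) with `E[Y²] = v`, `E[Y⁴] = 3 v²` gives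
`2 v ≤ v + s + 3 η v`. Both moments come from Gaussian integration by parts,
`E[Y^(n+2)] = (n + 1) v E[Y^n]`.
-/

open MeasureTheory ProbabilityTheory
open scoped NNReal

namespace ProbabilityTheory

variable {μ : ℝ} {v : ℝ≥0}

lemma integrable_pow_gaussianReal (n : ℕ) :
    Integrable (fun x : ℝ => x ^ n) (gaussianReal μ v) :=
  integrable_pow_of_mem_interior_integrableExpSet (X := fun x => x) (by simp) n

lemma integrable_gaussianReal_iff (hv : v ≠ 0) {f : ℝ → ℝ} :
    Integrable f (gaussianReal μ v) ↔ Integrable (fun x => gaussianPDFReal μ v x * f x) := by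
  rw [gaussianReal_of_var_ne_zero _ hv, integrable_withDensity_iff_integrable_smul'
    (measurable_gaussianPDF μ v) (ae_of_all _ fun _ => gaussianPDF_lt_top)]
  simp

lemma hasDerivAt_gaussianPDFReal (x : ℝ) :
    HasDerivAt (gaussianPDFReal μ v) (-((x - μ) / v) * gaussianPDFReal μ v x) x := by
  rcases eq_or_ne v 0 with rfl | hv
  · simp
  have hexp : HasDerivAt (fun x => Real.exp (-(x - μ) ^ 2 / (2 * v)))
      (Real.exp (-(x - μ) ^ 2 / (2 * v)) * (-(2 * (x - μ)) / (2 * v))) x := by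
    refine ((((hasDerivAt_id x).sub_const μ).pow 2).neg.div_const _).exp.congr_deriv ?_
    simp only [Pi.pow_apply, Pi.neg_apply, id]
    ring
  rw [gaussianPDFReal_def]
  refine (hexp.const_mul _).congr_deriv ?_
  have : (v : ℝ) ≠ 0 := by exact_mod_cast hv
  field_simp

lemma integral_pow_add_two_gaussianReal (n : ℕ) :
    ∫ x, x ^ (n + 2) ∂gaussianReal 0 v = (n + 1) * v * ∫ x, x ^ n ∂gaussianReal 0 v := by
  rcases eq_or_ne v 0 with rfl | hv
  · simp [gaussianReal_zero_var]
  have hv' : (v : ℝ) ≠ 0 := by exact_mod_cast hv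
  simp only [integral_gaussianReal_eq_integral_smul hv, smul_eq_mul]
  set φ := gaussianPDFReal 0 v
  have hint (k : ℕ) : Integrable (fun x => φ x * x ^ k) :=
    (integrable_gaussianReal_iff hv).1 (integrable_pow_gaussianReal k)
  have hderiv (x : ℝ) : HasDerivAt (fun x => φ x * x ^ (n + 1))
      ((n + 1) * (φ x * x ^ n) - φ x * x ^ (n + 2) / v) x := by
    refine ((hasDerivAt_gaussianPDFReal x).mul (hasDerivAt_pow (n + 1) x)).congr_deriv ?_
    push_cast
    field_simp
    ring
  have h0 := integral_eq_zero_of_hasDerivAt_of_integrable hderiv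
    (((hint n).const_mul _).sub ((hint (n + 2)).div_const _)) (hint (n + 1))
  rw [integral_sub ((hint n).const_mul _) ((hint (n + 2)).div_const _), integral_const_mul,
    integral_div, sub_eq_zero] at h0
  field_simp at h0
  linarith

lemma integral_sq_gaussianReal : ∫ x, x ^ 2 ∂gaussianReal 0 v = v := by
  simpa using integral_pow_add_two_gaussianReal (v := v) 0

lemma integral_pow_four_gaussianReal : ∫ x, x ^ 4 ∂gaussianReal 0 v = 3 * v ^ 2 := by
  rw [integral_pow_add_two_gaussianReal 2, integral_sq_gaussianReal]
  ring

lemma gaussianPDFReal_lt_gaussianPDFReal (hv : v ≠ 0) {μ' x : ℝ}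
    (h : (x - μ') ^ 2 < (x - μ) ^ 2) : gaussianPDFReal μ v x < gaussianPDFReal μ' v x := by
  have : (0 : ℝ) < v := by positivity
  simp only [gaussianPDFReal]
  gcongr

lemma integrable_gaussianReal_neg_iff {f : ℝ → ℝ} :
    Integrable f (gaussianReal (-μ) v) ↔ Integrable (fun x => f (-x)) (gaussianReal μ v) := by
  rw [← gaussianReal_map_neg]
  exact integrable_map_equiv (MeasurableEquiv.neg ℝ) f

lemma integral_gaussianReal_neg (f : ℝ → ℝ) :
    ∫ x, f x ∂gaussianReal (-μ) v = ∫ x, f (-x) ∂gaussianReal μ v := by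
  rw [← gaussianReal_map_neg]
  exact integral_map_equiv (MeasurableEquiv.neg ℝ) f

section OddFunction

variable {h : ℝ → ℝ}

lemma integral_gaussianReal_neg_of_odd (hodd : ∀ y, h (-y) = -h y) :
    ∫ y, h y ∂gaussianReal (-μ) v = -∫ y, h y ∂gaussianReal μ v := by
  simp only [integral_gaussianReal_neg, hodd, integral_neg]

lemma integral_gaussianReal_pos_of_odd (hodd : ∀ y, h (-y) = -h y) (hpos : ∀ y, 0 < y → 0 < h y)
    (hint : Integrable h (gaussianReal μ v)) (hv : v ≠ 0) (hμ : 0 < μ) :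
    0 < ∫ y, h y ∂gaussianReal μ v := by
  set F := fun y => (gaussianPDFReal μ v y - gaussianPDFReal (-μ) v y) * h y
  have hF_pos (y : ℝ) (hy : 0 < y) : 0 < F y :=
    mul_pos (sub_pos.2 (gaussianPDFReal_lt_gaussianPDFReal hv (by nlinarith))) (hpos y hy)
  have hF_nonneg : 0 ≤ F := by
    intro y
    rcases lt_trichotomy y 0 with hy | rfl | hy
    · refine (mul_pos_of_neg_of_neg ?_ ?_).le
      · exact sub_neg.2 (gaussianPDFReal_lt_gaussianPDFReal hv (by nlinarith))
      · simpa [hodd] using hpos (-y) (neg_pos.2 hy)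
    · simp [F, self_eq_neg.1 (by simpa using hodd 0)]
    · exact (hF_pos y hy).le
  have hint' : Integrable h (gaussianReal (-μ) v) :=
    integrable_gaussianReal_neg_iff.2 (by simpa [hodd] using hint.neg)
  have hF_int : Integrable F := by
    simp only [F, sub_mul]
    exact ((integrable_gaussianReal_iff hv).1 hint).sub ((integrable_gaussianReal_iff hv).1 hint')
  have hF_integral : ∫ y, F y = 2 * ∫ y, h y ∂gaussianReal μ v := by
    have hdensity (m : ℝ) : ∫ y, gaussianPDFReal m v y * h y = ∫ y, h y ∂gaussianReal m v := by
      simp [integral_gaussianReal_eq_integral_smul hv]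
    simp only [F, sub_mul]
    rw [integral_sub ((integrable_gaussianReal_iff hv).1 hint)
      ((integrable_gaussianReal_iff hv).1 hint'), hdensity, hdensity,
      integral_gaussianReal_neg_of_odd hodd]
    ring
  have : 0 < ∫ y, F y := by
    refine (integral_pos_iff_support_of_nonneg hF_nonneg hF_int).2 ?_
    refine lt_of_lt_of_le ?_ (measure_mono fun y (hy : y ∈ Set.Ioi 0) => (hF_pos y hy).ne')
    simp
  linarith

lemma eq_zero_of_integral_odd_gaussianReal_eq_zero (hodd : ∀ y, h (-y) = -h y)
    (hpos : ∀ y, 0 < y → 0 < h y) (hint : ∀ μ, Integrable h (gaussianReal μ v)) (hv : v ≠ 0)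
    (h0 : ∫ y, h y ∂gaussianReal μ v = 0) : μ = 0 := by
  rcases lt_trichotomy μ 0 with hμ | hμ | hμ
  · have := integral_gaussianReal_pos_of_odd hodd hpos (hint _) hv (neg_pos.2 hμ)
    rw [← neg_neg μ, integral_gaussianReal_neg_of_odd hodd] at h0
    linarith
  · exact hμ
  · linarith [integral_gaussianReal_pos_of_odd hodd hpos (hint μ) hv hμ]

end OddFunction

section StationaryVariance

variable {s η : ℝ}

lemma abs_div_add_mul_sq_le (hs : 0 < s) (hη : 0 ≤ η) (a y : ℝ) :
    |a / (s + η * y ^ 2)| ≤ |a / s| := by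
  rw [abs_div, abs_div, abs_of_pos hs, abs_of_pos (show 0 < s + η * y ^ 2 by positivity)]
  exact div_le_div_of_nonneg_left (abs_nonneg a) hs (le_add_of_nonneg_right (by positivity))

lemma integrable_pow_div_add_mul_sq_gaussianReal (hs : 0 < s) (hη : 0 ≤ η) (n : ℕ) :
    Integrable (fun y => y ^ n / (s + η * y ^ 2)) (gaussianReal μ v) :=
  ((integrable_pow_gaussianReal n).div_const s).mono
    (Measurable.aestronglyMeasurable (by fun_prop))
    (ae_of_all _ fun y => abs_div_add_mul_sq_le hs hη (y ^ n) y)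

lemma le_of_integral_sq_div_add_mul_sq_eq_one (hs : 0 < s) (hη : 0 ≤ η)
    (h1 : ∫ y, y ^ 2 / (s + η * y ^ 2) ∂gaussianReal 0 v = 1) : s ≤ v := by
  have : 1 ≤ (v : ℝ) / s := calc
    1 = ∫ y, y ^ 2 / (s + η * y ^ 2) ∂gaussianReal 0 v := h1.symm
    _ ≤ ∫ y, y ^ 2 / s ∂gaussianReal 0 v :=
      integral_mono (integrable_pow_div_add_mul_sq_gaussianReal hs hη 2)
        ((integrable_pow_gaussianReal 2).div_const s) fun y =>
          div_le_div_of_nonneg_left (sq_nonneg y) hs (le_add_of_nonneg_right (by positivity))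
    _ = v / s := by rw [integral_div, integral_sq_gaussianReal]
  rwa [one_le_div hs] at this

lemma two_mul_le_mul_div_add_mul_div {a c d : ℝ} (ha : 0 ≤ a) (hc : 0 < c) (hd : 0 < d) :
    2 * a ≤ c * (a / d) + a * d / c := by
  have key : c * (a / d) + a * d / c - 2 * a = a * (c - d) ^ 2 / (c * d) := by
    field_simp
    ring
  have : 0 ≤ a * (c - d) ^ 2 / (c * d) := by positivity
  linarith

lemma sub_mul_le_of_integral_sq_div_add_mul_sq_eq_one (hv : 0 < (v : ℝ)) (hs : 0 < s)
    (hη : 0 ≤ η) (h1 : ∫ y, y ^ 2 / (s + η * y ^ 2) ∂gaussianReal 0 v = 1) :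
    (1 - 3 * η) * v ≤ s := by
  have hpoint (y : ℝ) :
      2 * y ^ 2 ≤ v * (y ^ 2 / (s + η * y ^ 2)) + (s * y ^ 2 + η * y ^ 4) / v := by
    convert two_mul_le_mul_div_add_mul_div (sq_nonneg y) hv
      (show 0 < s + η * y ^ 2 by positivity) using 2
    ring
  have hq := integrable_pow_div_add_mul_sq_gaussianReal (μ := 0) (v := v) hs hη 2
  have h2 := integrable_pow_gaussianReal (μ := 0) (v := v) 2
  have h4 := integrable_pow_gaussianReal (μ := 0) (v := v) 4
  have hmoment : Integrable (fun y => s * y ^ 2 + η * y ^ 4) (gaussianReal 0 v) :=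
    (h2.const_mul s).add (h4.const_mul η)
  have hbound : Integrable (fun y => v * (y ^ 2 / (s + η * y ^ 2)) + (s * y ^ 2 + η * y ^ 4) / v)
      (gaussianReal 0 v) :=
    (hq.const_mul _).add (hmoment.div_const _)
  have : 2 * (v : ℝ) ≤ v + (s + 3 * η * v) := calc
    2 * (v : ℝ) = ∫ y, 2 * y ^ 2 ∂gaussianReal 0 v := by
      rw [integral_const_mul, integral_sq_gaussianReal]
    _ ≤ ∫ y, v * (y ^ 2 / (s + η * y ^ 2)) + (s * y ^ 2 + η * y ^ 4) / v ∂gaussianReal 0 v :=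
      integral_mono (h2.const_mul 2) hbound hpoint
    _ = v + (s + 3 * η * v) := by
      rw [integral_add (hq.const_mul _) (hmoment.div_const _), integral_const_mul, integral_div,
        integral_add (h2.const_mul s) (h4.const_mul η), integral_const_mul, integral_const_mul,
        integral_sq_gaussianReal, integral_pow_four_gaussianReal, h1]
      field_simp
  linarith

end StationaryVariance

end ProbabilityTheory

theorem gaussian_minimizer_variance_bounds_general {Ω : Type*} [MeasurableSpace Ω]
    (P : Measure Ω)
    (X : Ω → ℝ)
    (mstar : ℝ) (v : NNReal) (hv : 0 < (v : ℝ))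
    (hlaw : P.map X = gaussianReal mstar v)
    (η m_eta s2eta : ℝ) (hη0 : 0 < η) (hs2 : 0 < s2eta)
    (hstat1 : ∫ ω, (m_eta - X ω) / (s2eta + η * (m_eta - X ω) ^ 2) ∂P = 0)
    (hstat2 : ∫ ω, (m_eta - X ω) ^ 2 / (s2eta + η * (m_eta - X ω) ^ 2) ∂P = 1) :
    m_eta = mstar ∧ (1 - 3 * η) * (v : ℝ) ≤ s2eta ∧ s2eta ≤ (v : ℝ) := by
  have hY : HasLaw (fun ω => m_eta - X ω) (gaussianReal (m_eta - mstar) v) P :=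
    gaussianReal_const_sub ⟨.of_map_ne_zero (hlaw ▸ IsProbabilityMeasure.ne_zero _), hlaw⟩ m_eta
  have hstat1_law : ∫ y, y / (s2eta + η * y ^ 2) ∂gaussianReal (m_eta - mstar) v = 0 := by
    rw [← hY.integral_comp (Measurable.aestronglyMeasurable (by fun_prop))]
    exact hstat1
  have hstat2_law : ∫ y, y ^ 2 / (s2eta + η * y ^ 2) ∂gaussianReal (m_eta - mstar) v = 1 := by
    rw [← hY.integral_comp (Measurable.aestronglyMeasurable (by fun_prop))]
    exact hstat2
  have hmean : m_eta - mstar = 0 :=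
    eq_zero_of_integral_odd_gaussianReal_eq_zero (fun y => by ring) (fun y _ => by positivity)
      (fun _ => by simpa using integrable_pow_div_add_mul_sq_gaussianReal hs2 hη0.le 1)
      (by exact_mod_cast hv.ne') hstat1_law
  rw [hmean] at hstat2_law
  exact ⟨sub_eq_zero.1 hmean,
    sub_mul_le_of_integral_sq_div_add_mul_sq_eq_one hv hs2 hη0.le hstat2_law,
    le_of_integral_sq_div_add_mul_sq_eq_one hs2 hη0.le hstat2_law⟩

/-- lower and upper bounds on the variance `Σ²_η` of the minimizer of
`f_η` for a Gaussian with mean `m⋆` and variance `Σ²⋆ = v`: the stationarity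
conditions force `m_η = m⋆` and, for `η < 1/3`, `(1 - 3η)Σ²⋆ ≤ Σ²_η ≤ Σ²⋆`. -/
theorem gaussian_minimizer_variance_bounds {Ω : Type*} [MeasurableSpace Ω]
    (P : Measure Ω) [IsProbabilityMeasure P]
    (X : Ω → ℝ) (hX : Measurable X)
    (mstar : ℝ) (v : NNReal) (hv : 0 < (v : ℝ))
    (hlaw : P.map X = gaussianReal mstar v)
    (η m_eta s2eta : ℝ) (hη0 : 0 < η) (hη : η < 1 / 3) (hs2 : 0 < s2eta)
    (hstat1 : ∫ ω, (m_eta - X ω) / (s2eta + η * (m_eta - X ω) ^ 2) ∂P = 0)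
    (hstat2 : ∫ ω, (m_eta - X ω) ^ 2 / (s2eta + η * (m_eta - X ω) ^ 2) ∂P = 1) :
    m_eta = mstar ∧ (1 - 3 * η) * (v : ℝ) ≤ s2eta ∧ s2eta ≤ (v : ℝ) :=
  gaussian_minimizer_variance_bounds_general P X mstar v hv hlaw η m_eta s2eta hη0 hs2 hstat1 hstat2
end

section
/- Nonnegativity of the correction term at the stationary point: if X ~ N(m_⋆, Σ²_⋆), η ∈ (0,1), and (m_η, Σ²_η) satisfies E[Σ²_η/(Σ²_η + η(m_η - X)²)] = 1 - η, then E[log((1-η)(1 + η(m_η - X)²/Σ²_η))] ≥ 0. -/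
/-!
Since `log w ≥ 1 - w⁻¹` for `w > 0`, a positive random variable `W` with `E[W⁻¹] = 1` has
`E[log W] ≥ E[1 - W⁻¹] = 0`. For `W = (1 - η)(1 + η(m_η - X)²/Σ²_η)` the stationarity condition
says exactly `E[W⁻¹] = 1`.
-/

open MeasureTheory ProbabilityTheory

namespace MeasureTheory

variable {Ω : Type*} [MeasurableSpace Ω] {μ : Measure Ω}

theorem integral_nonneg_of_ae_le_of_integral_eq_zero {f g : Ω → ℝ} (hg : Integrable g μ)
    (hg0 : ∫ ω, g ω ∂μ = 0) (hgf : g ≤ᵐ[μ] f) : 0 ≤ ∫ ω, f ω ∂μ := by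
  by_cases hf : Integrable f μ
  · exact hg0 ▸ integral_mono_ae hg hf hgf
  · rw [integral_undef hf]

theorem integral_log_nonneg_of_integral_inv_eq_one [IsProbabilityMeasure μ] {W : Ω → ℝ}
    (hW : ∀ᵐ ω ∂μ, 0 < W ω) (hinv : ∫ ω, (W ω)⁻¹ ∂μ = 1) :
    0 ≤ ∫ ω, Real.log (W ω) ∂μ := by
  have hint : Integrable (fun ω => (W ω)⁻¹) μ := Integrable.of_integral_ne_zero (by simp [hinv])
  refine integral_nonneg_of_ae_le_of_integral_eq_zero (g := fun ω => 1 - (W ω)⁻¹)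
    ((integrable_const 1).sub hint) ?_ ?_
  · rw [integral_sub (integrable_const 1) hint, hinv]
    simp
  · filter_upwards [hW] with ω hω using Real.one_sub_inv_le_log_of_pos hω

end MeasureTheory

theorem gaussian_correction_nonneg_general {Ω : Type*} [MeasurableSpace Ω]
    (P : Measure Ω) [IsProbabilityMeasure P]
    (X : Ω → ℝ)
    (η m_eta s2eta : ℝ) (hη0 : 0 < η) (hη1 : η < 1) (hs2 : 0 < s2eta)
    (hstat : ∫ ω, s2eta / (s2eta + η * (m_eta - X ω) ^ 2) ∂P = 1 - η) :
    0 ≤ ∫ ω, Real.log ((1 - η) * (1 + η * (m_eta - X ω) ^ 2 / s2eta)) ∂P := by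
  have hη : 0 < 1 - η := sub_pos.mpr hη1
  have hinv_eq : ∀ ω, ((1 - η) * (1 + η * (m_eta - X ω) ^ 2 / s2eta))⁻¹ =
      (1 - η)⁻¹ * (s2eta / (s2eta + η * (m_eta - X ω) ^ 2)) := fun ω => by
    have : 0 < s2eta + η * (m_eta - X ω) ^ 2 := by positivity
    field_simp
  refine integral_log_nonneg_of_integral_inv_eq_one
    (Filter.Eventually.of_forall fun ω => by positivity) ?_
  simp only [hinv_eq, integral_const_mul, hstat, inv_mul_cancel₀ hη.ne']

/-- nonnegativity of the correction term at the stationary point: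
if `X ~ N(m⋆, Σ²⋆)`, `η ∈ (0,1)`, and `E[Σ²_η/(Σ²_η + η(m_η - X)²)] = 1 - η`, then
`E[log((1-η)(1 + η(m_η - X)²/Σ²_η))] ≥ 0`. -/
theorem gaussian_correction_nonneg {Ω : Type*} [MeasurableSpace Ω]
    (P : Measure Ω) [IsProbabilityMeasure P]
    (X : Ω → ℝ) (hX : Measurable X)
    (mstar : ℝ) (v : NNReal) (hv : 0 < (v : ℝ))
    (hlaw : P.map X = gaussianReal mstar v)
    (η m_eta s2eta : ℝ) (hη0 : 0 < η) (hη1 : η < 1) (hs2 : 0 < s2eta)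
    (hstat : ∫ ω, s2eta / (s2eta + η * (m_eta - X ω) ^ 2) ∂P = 1 - η) :
    0 ≤ ∫ ω, Real.log ((1 - η) * (1 + η * (m_eta - X ω) ^ 2 / s2eta)) ∂P :=
  gaussian_correction_nonneg_general P X η m_eta s2eta hη0 hη1 hs2 hstat
end
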